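/- Let 𝔄 = {A_1, …, A_M} be a finite set of N×N real matrices. Suppose there exists c such that for every sequence A : ℕ → 𝔄, every k ≥ 1 and every x ∈ ℝ^N, |A(k) A(k-1) ⋯ A(1) x| ≤ c |x| (Euclidean norm). Then there exists a norm ‖·‖ on ℝ^N such that the induced operator norm of each A_i is at most 1. -/
import Mathlib

open Matrix

variable {N : ℕ}

/-- `prodsN A k = A k * A (k-1) * ⋯ * A 1` (with `prodsN A 0 = 1`). -/
noncomputable def prodsN {N : ℕ} (A : ℕ → Matrix (Fin N) (Fin N) ℝ) :
    ℕ → Matrix (Fin N) (Fin N) ℝ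
  | 0 => 1
  | k + 1 => A (k + 1) * prodsN A k

/-- `ν : ℝ^N → ℝ` is a norm. -/
def IsNorm {N : ℕ} (ν : EuclideanSpace ℝ (Fin N) → ℝ) : Prop :=
  (∀ x, ν x = 0 ↔ x = 0) ∧
  (∀ (c : ℝ) x, ν (c • x) = |c| * ν x) ∧
  (∀ x y, ν (x + y) ≤ ν x + ν y)

lemma toEuclideanLin_mul_apply {N : ℕ} (M₁ M₂ : Matrix (Fin N) (Fin N) ℝ)
    (x : EuclideanSpace ℝ (Fin N)) :
    Matrix.toEuclideanLin (M₁ * M₂) x = Matrix.toEuclideanLin M₁ (Matrix.toEuclideanLin M₂ x) := by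
  simp [Matrix.toEuclideanLin_apply, Matrix.mulVec_mulVec]

lemma toEuclideanLin_one_apply {N : ℕ} (x : EuclideanSpace ℝ (Fin N)) :
    Matrix.toEuclideanLin (1 : Matrix (Fin N) (Fin N) ℝ) x = x := by
  simp [Matrix.toEuclideanLin_apply]

lemma prodsN_shift {N : ℕ} (A' : ℕ → Matrix (Fin N) (Fin N) ℝ)
    (B : Matrix (Fin N) (Fin N) ℝ) :
    ∀ k, prodsN (fun n => if n ≤ 1 then B else A' (n - 1)) (k + 1) = prodsN A' k * B := by
  intro k
  induction k with
  | zero => simp [prodsN]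
  | succ k ih =>
      show prodsN (fun n => if n ≤ 1 then B else A' (n - 1)) (k + 1 + 1) = _
      rw [prodsN, ih]
      have h1 : ¬ (k + 1 + 1 ≤ 1) := by omega
      simp only [h1, if_false]
      show A' (k + 1 + 1 - 1) * (prodsN A' k * B) = prodsN A' (k + 1) * B
      rw [show k + 1 + 1 - 1 = k + 1 from rfl, prodsN, mul_assoc]

theorem stmt15 (N : ℕ) (𝔄 : Finset (Matrix (Fin N) (Fin N) ℝ)) (c : ℝ)
    (hbound : ∀ A : ℕ → Matrix (Fin N) (Fin N) ℝ, (∀ k, A k ∈ 𝔄) →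
      ∀ k : ℕ, 1 ≤ k → ∀ x : EuclideanSpace ℝ (Fin N),
        ‖Matrix.toEuclideanLin (prodsN A k) x‖ ≤ c * ‖x‖) :
    ∃ ν : EuclideanSpace ℝ (Fin N) → ℝ, IsNorm ν ∧
      ∀ A ∈ 𝔄, ∀ x : EuclideanSpace ℝ (Fin N),
        ν (Matrix.toEuclideanLin A x) ≤ ν x := by
  classical
  set C : ℝ := max c 1 with hC
  have hC1 : (1:ℝ) ≤ C := le_max_right _ _
  -- the candidate set
  set S : EuclideanSpace ℝ (Fin N) → Set ℝ := fun x =>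
    insert ‖x‖ {r | ∃ A : ℕ → Matrix (Fin N) (Fin N) ℝ, (∀ j, A j ∈ 𝔄) ∧
      ∃ k, r = ‖Matrix.toEuclideanLin (prodsN A k) x‖} with hS
  have hmemS : ∀ x, ‖x‖ ∈ S x := fun x => Set.mem_insert _ _
  have hne : ∀ x, (S x).Nonempty := fun x => ⟨‖x‖, hmemS x⟩
  -- upper bound
  have hub : ∀ x, ∀ r ∈ S x, r ≤ C * ‖x‖ := by
    intro x r hr
    rcases hr with hr | ⟨A, hA, k, rfl⟩
    · rw [hr]
      nlinarith [norm_nonneg x]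
    · rcases Nat.eq_zero_or_pos k with rfl | hk
      · simp only [prodsN, toEuclideanLin_one_apply]
        nlinarith [norm_nonneg x]
      · calc ‖Matrix.toEuclideanLin (prodsN A k) x‖ ≤ c * ‖x‖ := hbound A hA k hk x
          _ ≤ C * ‖x‖ := by nlinarith [norm_nonneg x, le_max_left c 1]
  have hbdd : ∀ x, BddAbove (S x) := fun x => ⟨C * ‖x‖, fun r hr => hub x r hr⟩
  set ν : EuclideanSpace ℝ (Fin N) → ℝ := fun x => sSup (S x) with hν
  have hlower : ∀ x, ‖x‖ ≤ ν x := fun x => le_csSup (hbdd x) (hmemS x)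
  -- scaling of S
  have hSsmul : ∀ (t : ℝ) (x : EuclideanSpace ℝ (Fin N)),
      S (t • x) = (fun r => |t| * r) '' S x := by
    intro t x
    ext r
    constructor
    · rintro (hr | ⟨A, hA, k, rfl⟩)
      · exact ⟨‖x‖, hmemS x, by show |t| * ‖x‖ = r; rw [hr, norm_smul, Real.norm_eq_abs]⟩
      · exact ⟨‖Matrix.toEuclideanLin (prodsN A k) x‖, Set.mem_insert_iff.mpr
          (Or.inr ⟨A, hA, k, rfl⟩), by
            show |t| * _ = _
            rw [_root_.map_smul, norm_smul, Real.norm_eq_abs]⟩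
    · rintro ⟨s, hs | ⟨A, hA, k, rfl⟩, rfl⟩
      · left; rw [hs, norm_smul, Real.norm_eq_abs]
      · right
        exact ⟨A, hA, k, by
          show |t| * _ = _
          rw [_root_.map_smul, norm_smul, Real.norm_eq_abs]⟩
  have habs : ∀ (t : ℝ) x, ν (t • x) = |t| * ν x := by
    intro t x
    rw [hν]
    simp only
    rw [hSsmul t x]
    rcases eq_or_ne t 0 with rfl | ht
    · have : (fun r => |(0:ℝ)| * r) '' S x = {0} := by
        ext r
        simp only [abs_zero, zero_mul, Set.mem_image, Set.mem_singleton_iff]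
        constructor
        · rintro ⟨s, _, rfl⟩; rfl
        · rintro rfl; exact ⟨‖x‖, hmemS x, rfl⟩
      rw [this, csSup_singleton, abs_zero, zero_mul]
    · have hpos : 0 < |t| := abs_pos.mpr ht
      apply le_antisymm
      · apply csSup_le ((hne x).image _)
        rintro r ⟨s, hs, rfl⟩
        exact mul_le_mul_of_nonneg_left (le_csSup (hbdd x) hs) hpos.le
      · rw [← le_div_iff₀' hpos] at *
        apply csSup_le (hne x)
        intro s hs
        rw [le_div_iff₀' hpos]
        exact le_csSup ⟨|t| * (C * ‖x‖), by
          rintro r ⟨u, hu, rfl⟩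
          exact mul_le_mul_of_nonneg_left (hub x u hu) hpos.le⟩ ⟨s, hs, rfl⟩
  refine ⟨ν, ⟨?_, habs, ?_⟩, ?_⟩
  · -- ν x = 0 ↔ x = 0
    intro x
    constructor
    · intro h
      have := hlower x
      rw [h] at this
      exact norm_eq_zero.mp (le_antisymm this (norm_nonneg x))
    · rintro rfl
      have h0 : S 0 = {0} := by
        ext r
        constructor
        · rintro (hr | ⟨A, hA, k, rfl⟩)
          · simp [hr]
          · simp [map_zero]
        · rintro rfl
          left; simp
      rw [hν]; simp only; rw [h0, csSup_singleton]
  · -- triangle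
    intro x y
    apply csSup_le (hne _)
    rintro r (hr | ⟨A, hA, k, rfl⟩)
    · rw [hr]
      exact le_trans (norm_add_le x y) (add_le_add (hlower x) (hlower y))
    · rw [map_add]
      calc ‖Matrix.toEuclideanLin (prodsN A k) x + Matrix.toEuclideanLin (prodsN A k) y‖
          ≤ ‖Matrix.toEuclideanLin (prodsN A k) x‖ + ‖Matrix.toEuclideanLin (prodsN A k) y‖ :=
            norm_add_le _ _
        _ ≤ ν x + ν y := add_le_add
            (le_csSup (hbdd x) (Set.mem_insert_iff.mpr (Or.inr ⟨A, hA, k, rfl⟩)))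
            (le_csSup (hbdd y) (Set.mem_insert_iff.mpr (Or.inr ⟨A, hA, k, rfl⟩)))
  · -- invariance
    intro B hB x
    have hsub : S (Matrix.toEuclideanLin B x) ⊆ S x := by
      rintro r (hr | ⟨A, hA, k, rfl⟩)
      · -- r = ‖B x‖ : use constant sequence, k = 1
        rw [hr]
        right
        refine ⟨fun _ => B, fun _ => hB, 1, ?_⟩
        rw [show prodsN (fun _ => B) 1 = B * 1 from rfl, mul_one]
      · -- r = ‖P_k (B x)‖ = ‖(P_k * B) x‖
        right
        refine ⟨fun n => if n ≤ 1 then B else A (n - 1), fun j => by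
          dsimp only; split <;> [exact hB; exact hA _], k + 1, ?_⟩
        rw [prodsN_shift A B k, toEuclideanLin_mul_apply]
    exact csSup_le_csSup (hbdd x) (hne _) hsub
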